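/- Let A be a convex acceptance set with nonempty interior in an ordered locally convex space X and S a traded asset whose payoff S_T is strictly positive. Then ρ_{A,S} is finitely valued and continuous on X (in particular it never attains −∞ or +∞). -/

import Mathlib

open Filter Topology

variable {X : Type*} [AddCommGroup X] [Module ℝ X] [PartialOrder X]
  [CovariantClass X X (· + ·) (· ≤ ·)] [PosSMulMono ℝ X]
  [TopologicalSpace X] [IsTopologicalAddGroup X] [ContinuousSMul ℝ X]

/-- The risk measure `ρ_{A,S}(x) = inf {m : x + (m/S₀)·S_T ∈ A}`, valued in `EReal`
(with `inf ∅ = ⊤` and unbounded-below giving `⊥`). -/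
noncomputable def rho (A : Set X) (S0 : ℝ) (ST : X) (x : X) : EReal :=
  sInf ((fun r : ℝ => (r : EReal)) '' {r : ℝ | x + (r / S0) • ST ∈ A})

/-- A set is monotone if it contains, with any element, every larger element. -/
def MonotoneSet (A : Set X) : Prop := ∀ x ∈ A, ∀ y, x ≤ y → y ∈ A

/-- An acceptance set: nonempty, proper, and monotone. -/
def AcceptanceSet (A : Set X) : Prop := A.Nonempty ∧ A ≠ Set.univ ∧ MonotoneSet A

/-- The algebraic core (algebraic interior) of a set. -/
def algCore (A : Set X) : Set X :=
  {x | ∀ y : X, ∃ ε > 0, ∀ l : ℝ, |l| < ε → x + l • y ∈ A}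

/-- `Z` is strictly positive: every nonzero positive continuous linear functional is
strictly positive on `Z`. -/
def StrictlyPositiveElt (Z : X) : Prop :=
  0 ≤ Z ∧ ∀ ψ : X →L[ℝ] ℝ, ψ ≠ 0 → (∀ x : X, 0 ≤ x → 0 ≤ ψ x) → 0 < ψ Z

/-! Write `v = S0⁻¹ • ST`, so that `ρ(x) = inf {r : x + r • v ∈ A}`. A nonzero continuous functional
that is bounded above on the nonempty upper set `A` is nonpositive on the positive cone, hence
strictly negative at the strictly positive `v`. Separating a point outside `A` from `A` by such a
functional bounds the levels `r` from below, and separating `interior A` from the line `x + ℝ v`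
shows that the line meets `interior A`; so `ρ` is real-valued. By convexity, `x + s • v` lies in
`interior A` when `ρ(x) < s` and outside `closure A` when `s < ρ(x)`; both conditions are open in
`x`, which gives continuity. -/

open Set

theorem convex_range_add_smul {E : Type*} [AddCommGroup E] [Module ℝ E] (x v : E) :
    Convex ℝ (range fun r : ℝ => x + r • v) := by
  rw [show (fun r : ℝ => x + r • v) = (x + ·) ∘ LinearMap.toSpanSingleton ℝ E v from rfl,
    range_comp, ← image_univ]
  exact (convex_univ.linear_image _).translate x

theorem StrictlyPositiveElt.smul {E : Type*} [AddCommGroup E] [Module ℝ E] [PartialOrder E]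
    [PosSMulMono ℝ E] [TopologicalSpace E] {v : E} (hv : StrictlyPositiveElt v) {c : ℝ}
    (hc : 0 < c) : StrictlyPositiveElt (c • v) :=
  ⟨smul_nonneg hc.le hv.1, fun ψ hψ hψpos => by
    rw [map_smul, smul_eq_mul]
    exact mul_pos hc (hv.2 ψ hψ hψpos)⟩

section OrderedModule

variable {E : Type*} [AddCommGroup E] [Module ℝ E] [PartialOrder E]
  [CovariantClass E E (· + ·) (· ≤ ·)] [PosSMulMono ℝ E]

theorem IsUpperSet.add_smul_mem {A : Set E} (hA : IsUpperSet A) {x v : E} (hv : 0 ≤ v)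
    {r s : ℝ} (hrs : r ≤ s) (hr : x + r • v ∈ A) : x + s • v ∈ A := by
  refine hA ?_ hr
  calc x + r • v ≤ x + r • v + (s - r) • v :=
        le_add_of_nonneg_right (smul_nonneg (sub_nonneg.2 hrs) hv)
    _ = x + s • v := by module

theorem IsUpperSet.map_nonpos_of_bddAbove {F : Type*} [FunLike F E ℝ] [LinearMapClass F ℝ E ℝ]
    {A : Set E} (hA : IsUpperSet A) (hne : A.Nonempty) {f : F} (hf : BddAbove (f '' A))
    {z : E} (hz : 0 ≤ z) : f z ≤ 0 := by
  obtain ⟨a, ha⟩ := hne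
  obtain ⟨u, hu⟩ := hf
  by_contra! hfz
  have hau : f a ≤ u := hu (mem_image_of_mem f ha)
  -- `a + t • z ∈ A` for `t ≥ 0`, but `f (a + t • z) = f a + t * f z > u` for this `t`
  have ht : 0 ≤ (u - f a + 1) / f z := div_nonneg (by linarith) hfz.le
  have hmem : a + ((u - f a + 1) / f z) • z ∈ A :=
    hA (le_add_of_nonneg_right (smul_nonneg ht hz)) ha
  have hle := hu (mem_image_of_mem f hmem)
  rw [map_add, map_smul, smul_eq_mul, div_mul_cancel₀ _ hfz.ne'] at hle
  linarith

theorem StrictlyPositiveElt.map_neg_of_bddAbove [TopologicalSpace E] {v : E}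
    (hv : StrictlyPositiveElt v) {A : Set E} (hA : IsUpperSet A) (hne : A.Nonempty)
    {f : E →L[ℝ] ℝ} (hf0 : f ≠ 0) (hf : BddAbove (f '' A)) : f v < 0 := by
  have := hv.2 (-f) (neg_ne_zero.2 hf0) fun z hz => by
    simpa using hA.map_nonpos_of_bddAbove hne hf hz
  simpa using this

end OrderedModule

theorem Convex.add_smul_mem_interior_of_lt {E : Type*} [AddCommGroup E] [Module ℝ E]
    [TopologicalSpace E] [IsTopologicalAddGroup E] [ContinuousSMul ℝ E] {A : Set E}
    (hA : Convex ℝ A) {x v : E} {a b c : ℝ}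
    (ha : x + a • v ∈ closure A) (hb : x + b • v ∈ interior A) (hac : a < c) (hcb : c ≤ b) :
    x + c • v ∈ interior A := by
  have hba : 0 < b - a := by linarith
  have hb' : x + a • v + (b - a) • v ∈ interior A := by convert hb using 1; module
  have key := hA.add_smul_mem_interior' ha hb'
    ⟨div_pos (sub_pos.2 hac) hba, (div_le_one hba).2 (by linarith)⟩
  rwa [smul_smul, div_mul_cancel₀ _ hba.ne', add_assoc, ← add_smul, add_sub_cancel] at key

theorem isUpperSet_interior {E : Type*} [AddCommGroup E] [PartialOrder E]
    [CovariantClass E E (· + ·) (· ≤ ·)] [TopologicalSpace E] [IsTopologicalAddGroup E]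
    {A : Set E} (hA : IsUpperSet A) : IsUpperSet (interior A) :=
  haveI : IsOrderedAddMonoid E :=
    ⟨fun _ _ h c => add_le_add_left h c, fun _ _ h c => add_le_add_right h c⟩
  hA.interior

theorem EReal.coe_csInf {s : Set ℝ} (hne : s.Nonempty) (hbdd : BddBelow s) :
    ((sInf s : ℝ) : EReal) = sInf ((↑) '' s) :=
  EReal.coe_strictMono.monotone.map_csInf_of_continuousAt
    continuous_coe_real_ereal.continuousAt hne hbdd

section Levels

variable {E : Type*} [AddCommGroup E] [Module ℝ E] [PartialOrder E]
  [CovariantClass E E (· + ·) (· ≤ ·)] [PosSMulMono ℝ E] [TopologicalSpace E]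
  [IsTopologicalAddGroup E] [ContinuousSMul ℝ E] {A : Set E} {v : E}

theorem bddBelow_setOf_add_smul_mem (hA : IsUpperSet A) (hconv : Convex ℝ A)
    (hint : (interior A).Nonempty) (hAuniv : A ≠ univ) (hv : StrictlyPositiveElt v) (x : E) :
    BddBelow {r : ℝ | x + r • v ∈ A} := by
  obtain ⟨y, hy⟩ := (ne_univ_iff_exists_notMem A).1 hAuniv
  obtain ⟨f, hf0, hfA⟩ :=
    geometric_hahn_banach_of_nonempty_interior_point hconv (fun h => hy (interior_subset h)) hint
  have hfv : f v < 0 := hv.map_neg_of_bddAbove hA (hint.mono interior_subset) hf0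
    ⟨f y, forall_mem_image.2 hfA⟩
  refine ⟨(f y - f x) / f v, fun r hr => ?_⟩
  have := hfA _ hr
  rw [map_add, map_smul, smul_eq_mul] at this
  rw [div_le_iff_of_neg hfv]
  linarith

theorem exists_add_smul_mem_interior (hA : IsUpperSet A) (hconv : Convex ℝ A)
    (hint : (interior A).Nonempty) (hv : StrictlyPositiveElt v) (x : E) :
    ∃ r : ℝ, x + r • v ∈ interior A := by
  by_contra! h
  have hdisj : Disjoint (interior A) (range fun r : ℝ => x + r • v) :=
    disjoint_right.2 fun _ ⟨r, hr⟩ => hr ▸ h r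
  obtain ⟨f, u, hf0, hfA, hfline⟩ := geometric_hahn_banach_of_nonempty_interior hconv
    (convex_range_add_smul x v) hdisj hint (range_nonempty _)
  have hfv : f v < 0 := hv.map_neg_of_bddAbove hA (hint.mono interior_subset) hf0
    ⟨u, forall_mem_image.2 hfA⟩
  -- `f` is bounded below on the line although it decreases along `v`
  have := hfline _ ⟨(u - f x) / f v + 1, rfl⟩
  rw [map_add, map_smul, smul_eq_mul, add_mul, div_mul_cancel₀ _ hfv.ne] at this
  linarith

end Levels

/-- `ρ_{A,v}` for the numéraire `v`, as a real number; it is the junk value `0` unless the set of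
levels is nonempty and bounded below. -/
noncomputable def capitalRequirement {E : Type*} [AddCommGroup E] [Module ℝ E]
    (A : Set E) (v x : E) : ℝ :=
  sInf {r : ℝ | x + r • v ∈ A}

section CapitalRequirement

variable {E : Type*} [AddCommGroup E] [Module ℝ E] [PartialOrder E]
  [CovariantClass E E (· + ·) (· ≤ ·)] [PosSMulMono ℝ E] [TopologicalSpace E]
  [IsTopologicalAddGroup E] [ContinuousSMul ℝ E] {A : Set E} {v x : E} {s : ℝ}

theorem add_smul_mem_interior_of_capitalRequirement_lt (hA : IsUpperSet A)
    (hconv : Convex ℝ A) (hv : 0 ≤ v) (hx : ∃ r : ℝ, x + r • v ∈ interior A)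
    (hs : capitalRequirement A v x < s) : x + s • v ∈ interior A := by
  obtain ⟨r₀, hr₀⟩ := hx
  obtain ⟨r, hrA, hrs⟩ := exists_lt_of_csInf_lt ⟨r₀, interior_subset (s := A) hr₀⟩ hs
  have hmax : x + max r₀ s • v ∈ interior A :=
    (isUpperSet_interior hA).add_smul_mem hv (le_max_left _ _) hr₀
  exact hconv.add_smul_mem_interior_of_lt (subset_closure hrA) hmax hrs (le_max_right _ _)

theorem add_smul_notMem_closure_of_lt_capitalRequirement (hA : IsUpperSet A)
    (hconv : Convex ℝ A) (hv : 0 ≤ v) (hx : ∃ r : ℝ, x + r • v ∈ interior A)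
    (hbdd : BddBelow {r : ℝ | x + r • v ∈ A}) (hs : s < capitalRequirement A v x) :
    x + s • v ∉ closure A := by
  intro hcl
  set m := capitalRequirement A v x
  have hlarge : x + (m + 1) • v ∈ interior A :=
    add_smul_mem_interior_of_capitalRequirement_lt hA hconv hv hx (lt_add_one m)
  have hmid : x + ((s + m) / 2) • v ∈ interior A :=
    hconv.add_smul_mem_interior_of_lt hcl hlarge (by linarith) (by linarith)
  have : m ≤ (s + m) / 2 := csInf_le hbdd (interior_subset (s := A) hmid)
  linarith

theorem continuous_capitalRequirement (hA : IsUpperSet A) (hconv : Convex ℝ A) (hv : 0 ≤ v)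
    (hex : ∀ x, ∃ r : ℝ, x + r • v ∈ interior A) (hbdd : ∀ x, BddBelow {r : ℝ | x + r • v ∈ A}) :
    Continuous (capitalRequirement A v) := by
  refine continuous_iff_continuousAt.2 fun x => tendsto_order.2 ⟨fun a ha => ?_, fun b hb => ?_⟩
  · obtain ⟨c, hac, hc⟩ := exists_between ha
    have hout : x + c • v ∈ (closure A)ᶜ :=
      add_smul_notMem_closure_of_lt_capitalRequirement hA hconv hv (hex x) (hbdd x) hc
    filter_upwards [(continuous_add_const (c • v)).continuousAt.preimage_mem_nhds
      (isClosed_closure.isOpen_compl.mem_nhds hout)] with y hy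
    refine hac.trans_le (not_lt.1 fun hyc => hy ?_)
    exact interior_subset_closure
      (add_smul_mem_interior_of_capitalRequirement_lt hA hconv hv (hex y) hyc)
  · obtain ⟨c, hc, hcb⟩ := exists_between hb
    have hin : x + c • v ∈ interior A :=
      add_smul_mem_interior_of_capitalRequirement_lt hA hconv hv (hex x) hc
    filter_upwards [(continuous_add_const (c • v)).continuousAt.preimage_mem_nhds
      (isOpen_interior.mem_nhds hin)] with y hy
    exact (csInf_le (hbdd y) (interior_subset (s := A) hy)).trans_lt hcb

end CapitalRequirement

theorem rho_eq_capitalRequirement {E : Type*} [AddCommGroup E] [Module ℝ E]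
    (A : Set E) (S0 : ℝ) (ST x : E)
    (hne : {r : ℝ | x + r • (S0⁻¹ • ST) ∈ A}.Nonempty)
    (hbdd : BddBelow {r : ℝ | x + r • (S0⁻¹ • ST) ∈ A}) :
    rho A S0 ST x = capitalRequirement A (S0⁻¹ • ST) x := by
  rw [capitalRequirement, EReal.coe_csInf hne hbdd, rho]
  simp only [div_eq_mul_inv, mul_smul]

theorem rho_finite_continuous_of_strictlyPositive_payoff_general
    (A : Set X) (S0 : ℝ) (ST : X)
    (hA : AcceptanceSet A) (hconv : Convex ℝ A) (hint : (interior A).Nonempty)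
    (hS0 : 0 < S0) (hST : StrictlyPositiveElt ST) :
    (∀ x : X, rho A S0 ST x ≠ ⊤ ∧ rho A S0 ST x ≠ ⊥) ∧
    Continuous (rho A S0 ST) := by
  obtain ⟨-, hAuniv, hmono⟩ := hA
  have hup : IsUpperSet A := fun _ _ hab ha => hmono _ ha _ hab
  have hv := hST.smul (inv_pos.2 hS0)
  have hex := exists_add_smul_mem_interior hup hconv hint hv
  have hbdd := bddBelow_setOf_add_smul_mem hup hconv hint hAuniv hv
  have hrho : rho A S0 ST = fun x => (capitalRequirement A (S0⁻¹ • ST) x : EReal) :=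
    funext fun x => rho_eq_capitalRequirement A S0 ST x
      ((hex x).imp fun _ hr => interior_subset (s := A) hr) (hbdd x)
  rw [hrho]
  exact ⟨fun x => ⟨EReal.coe_ne_top _, EReal.coe_ne_bot _⟩,
    continuous_coe_real_ereal.comp (continuous_capitalRequirement hup hconv hv.1 hex hbdd)⟩

/-- for a convex acceptance set with nonempty interior in an ordered
locally convex space, if the payoff S_T is strictly positive then ρ_{A,S} is
finitely valued and continuous. -/
theorem rho_finite_continuous_of_strictlyPositive_payoff [LocallyConvexSpace ℝ X]
    (A : Set X) (S0 : ℝ) (ST : X)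
    (hA : AcceptanceSet A) (hconv : Convex ℝ A) (hint : (interior A).Nonempty)
    (hS0 : 0 < S0) (hSTne : ST ≠ 0) (hST : StrictlyPositiveElt ST) :
    (∀ x : X, rho A S0 ST x ≠ ⊤ ∧ rho A S0 ST x ≠ ⊥) ∧
    Continuous (rho A S0 ST) :=
  rho_finite_continuous_of_strictlyPositive_payoff_general A S0 ST hA hconv hint hS0 hST
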